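/- Let W_1,…,W_n be the weighted left creation operators associated to a positive regular free holomorphic function f = Σ_{|α|≥1} a_α X_α. Then I − Σ_{|β|≥1} a_β W_β W_β* = P_ℂ, the orthogonal projection of F²(H_n) onto the span of the vacuum vector 1, where the series converges in the strong operator topology. In particular Σ_{|α|≥1} a_α W_α W_α* ≤ I. -/

import Mathlib

open Filter Topology
open scoped ComplexConjugate ENNReal

namespace NCDomain

/-- Words in the free monoid `F_n^+` on `n` generators. -/
abbrev Word (n : ℕ) := FreeMonoid (Fin n)

instance {n : ℕ} : DecidableEq (Word n) :=
  inferInstanceAs (DecidableEq (List (Fin n)))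

/-- The length `|α|` of a word. -/
def wordLen {n : ℕ} (α : Word n) : ℕ := FreeMonoid.length α

/-- The coefficients `b_α`, defined by `b_{g_0} = 1` and, for `|α| ≥ 1`,
`b_α = Σ_{j=1}^{|α|} Σ_{γ_1⋯γ_j = α, |γ_i| ≥ 1} a_{γ_1}⋯a_{γ_j}`, the sum running over
all ordered factorizations of `α` into nonempty words. -/
noncomputable def bCoeff {n : ℕ} (a : Word n → ℝ) (α : Word n) : ℝ :=
  if α = 1 then 1
  else ∑' L : {L : List (Word n) // L.prod = α ∧ ∀ w ∈ L, w ≠ 1}, (L.1.map a).prod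

/-- `f = Σ_{|α|≥1} a_α X_α` is a positive regular free holomorphic function:
`a_{g_0} = 0`, `a_α ≥ 0`, `a_{g_i} > 0`, and
`limsup_{k→∞} (Σ_{|α|=k} |a_α|²)^{1/(2k)} < ∞`. -/
def PosRegular {n : ℕ} (a : Word n → ℝ) : Prop :=
  a 1 = 0 ∧ (∀ α, 0 ≤ a α) ∧ (∀ i : Fin n, 0 < a (FreeMonoid.of i)) ∧
    ∃ C : ℝ, ∀ᶠ k in atTop,
      (∑' α : {β : Word n // wordLen β = k}, (a α.1) ^ 2) ≤ C ^ (2 * k)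

/-- For a tuple `T` of operators and a word `α = g_{i_1}⋯g_{i_k}`,
the product `T_α = T_{i_1}⋯T_{i_k}` (and `T_{g_0} = I`). -/
noncomputable def opWord {n : ℕ} {H : Type*} [NormedAddCommGroup H] [NormedSpace ℂ H]
    (T : Fin n → H →L[ℂ] H) (α : Word n) : H →L[ℂ] H :=
  ((FreeMonoid.toList α).map T).prod

/-- The full Fock space `F²(H_n)`, realized as `ℓ²` over the free monoid. -/
abbrev Fock (n : ℕ) : Type := lp (fun _ : Word n => ℂ) 2

/-- The canonical orthonormal basis vector `e_α` of the Fock space. -/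
noncomputable def fockBasis {n : ℕ} (α : Word n) : Fock n := lp.single 2 α (1 : ℂ)

/-- `W` is the tuple of weighted left creation operators associated with `f = Σ a_α X_α`:
`W_i e_α = √(b_α / b_{g_i α}) e_{g_i α}`. -/
def IsWeightedShift {n : ℕ} (a : Word n → ℝ) (W : Fin n → Fock n →L[ℂ] Fock n) : Prop :=
  ∀ (i : Fin n) (α : Word n),
    W i (fockBasis α) =
      (Real.sqrt (bCoeff a α / bCoeff a (FreeMonoid.of i * α)) : ℂ) •
        fockBasis (FreeMonoid.of i * α)

/-!
Every `a_β W_β W_β^*` is diagonal in the basis `(e_α)`: `W_β^*` maps `e_{βγ}` to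
`√(b_γ / b_{βγ}) e_γ` and kills `e_α` unless `β` is a prefix of `α`, so the `α`-th entry is
`a_β b_γ / b_α` when `α = βγ`. Splitting off the first factor of an ordered factorization gives
`b_α = Σ_{α = βγ, β ≠ 1} a_β b_γ` for `α ≠ 1`, so the entries sum to `1` at `α ≠ 1` and to `0`
at the vacuum. They are nonnegative, hence every partial sum is diagonal with entries in
`[0, 1]`, and strong convergence follows by dominated convergence in `ℓ²`. Pairing the series with
`x` gives the inequality.
-/

section Splittings

variable {α : Type*}

abbrev PrefixSplit (w : FreeMonoid α) : Type _ :=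
  {p : FreeMonoid α × FreeMonoid α // p.1 * p.2 = w ∧ p.1 ≠ 1}

theorem PrefixSplit.length_snd_lt {w : FreeMonoid α} (p : PrefixSplit w) :
    p.1.2.length < w.length := by
  have h1 : p.1.1.length ≠ 0 := fun h => p.2.2 (FreeMonoid.length_eq_zero.1 h)
  have h2 := congrArg FreeMonoid.length p.2.1
  rw [FreeMonoid.length_mul] at h2
  omega

instance : IsEmpty (PrefixSplit (1 : FreeMonoid α)) :=
  ⟨fun p => p.2.2 (eq_one_of_mul_right' p.2.1)⟩

-- A splitting of `w` is determined by the length of its left factor.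
instance (w : FreeMonoid α) : Finite (PrefixSplit w) := by
  refine Finite.of_injective
    (fun p : PrefixSplit w => (⟨p.1.1.length, ?_⟩ : Fin (w.length + 1))) ?_
  · have h := congrArg FreeMonoid.length p.2.1
    rw [FreeMonoid.length_mul] at h
    omega
  · intro ⟨⟨u, v⟩, huv, _⟩ ⟨⟨u', v'⟩, huv', _⟩ hlen
    replace hlen : u.length = u'.length := Fin.val_eq_of_eq hlen
    have happ : u.toList ++ v.toList = u'.toList ++ v'.toList := by
      rw [← FreeMonoid.toList_mul, ← FreeMonoid.toList_mul, huv, huv']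
    obtain ⟨hu, hv⟩ := List.append_inj happ hlen
    simp only [Subtype.mk.injEq, Prod.mk.injEq]
    exact ⟨FreeMonoid.toList.injective hu, FreeMonoid.toList.injective hv⟩

end Splittings

section WeightedShift

open Function

variable {𝕜 ι : Type*} [RCLike 𝕜] [DecidableEq ι]

theorem lp.apply_eq_inner_single (f : lp (fun _ : ι => 𝕜) 2) (i : ι) :
    f i = inner 𝕜 (lp.single 2 i (1 : 𝕜)) f := by
  simp [lp.inner_single_left]

variable {S : lp (fun _ : ι => 𝕜) 2 →L[𝕜] lp (fun _ : ι => 𝕜) 2} {σ : ι → ι} {w : ι → 𝕜}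

theorem adjoint_single_apply_of_weighted
    (hS : ∀ i, S (lp.single 2 i 1) = w i • lp.single 2 (σ i) 1) (j i : ι) :
    S.adjoint (lp.single 2 j 1) i = if σ i = j then conj (w i) else 0 := by
  rw [lp.apply_eq_inner_single, ContinuousLinearMap.adjoint_inner_right, hS, inner_smul_left,
    ← lp.apply_eq_inner_single, lp.single_apply]
  split_ifs <;> simp_all

theorem apply_adjoint_apply_of_weighted (hσ : Injective σ)
    (hS : ∀ i, S (lp.single 2 i 1) = w i • lp.single 2 (σ i) 1) (x : lp (fun _ : ι => 𝕜) 2)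
    (j : ι) : S (S.adjoint x) j = extend σ (fun i => ‖w i‖ ^ 2) 0 j • x j := by
  rw [lp.apply_eq_inner_single, ← ContinuousLinearMap.adjoint_inner_left,
    RCLike.real_smul_eq_coe_mul]
  by_cases hj : ∃ i, σ i = j
  · obtain ⟨i, rfl⟩ := hj
    have hadj : S.adjoint (lp.single 2 (σ i) 1) = conj (w i) • lp.single 2 i 1 := by
      ext k
      rw [adjoint_single_apply_of_weighted hS, lp.coeFn_smul, Pi.smul_apply, lp.single_apply]
      by_cases hk : k = i <;> simp [hk, hσ.eq_iff]
    rw [hadj, inner_smul_left, RCLike.conj_conj, ContinuousLinearMap.adjoint_inner_right, hS,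
      inner_smul_left, ← lp.apply_eq_inner_single, hσ.extend_apply, ← mul_assoc,
      RCLike.mul_conj]
    push_cast
    rfl
  · have hadj : S.adjoint (lp.single 2 j 1) = 0 := by
      ext k
      rw [adjoint_single_apply_of_weighted hS, if_neg fun h => hj ⟨k, h⟩]
      rfl
    rw [hadj, inner_zero_left, extend_apply' _ _ _ hj]
    simp

theorem lp.sub_inner_single_smul_single_apply (x : lp (fun _ : ι => 𝕜) 2) (i j : ι) :
    (x - inner 𝕜 (lp.single 2 i (1 : 𝕜)) x • lp.single 2 i 1 : lp (fun _ : ι => 𝕜) 2) j =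
      (if j = i then 0 else 1 : ℝ) • x j := by
  rw [lp.coeFn_sub, Pi.sub_apply, lp.coeFn_smul, Pi.smul_apply, ← lp.apply_eq_inner_single,
    lp.single_apply]
  by_cases h : j = i
  · subst h; simp
  · simp [h]

end WeightedShift

section InnerProduct

variable {𝕜 H κ : Type*} [RCLike 𝕜] [NormedAddCommGroup H] [InnerProductSpace 𝕜 H]

theorem hasSum_mul_norm_adjoint_sq [CompleteSpace H] {S : κ → H →L[𝕜] H} {c : κ → ℝ} {x y : H}
    (h : HasSum (fun k => (c k : 𝕜) • S k ((S k).adjoint x)) y) :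
    HasSum (fun k => c k * ‖(S k).adjoint x‖ ^ 2) (RCLike.re (inner 𝕜 x y)) := by
  have hterm : ∀ k, RCLike.re (inner 𝕜 x ((c k : 𝕜) • S k ((S k).adjoint x))) =
      c k * ‖(S k).adjoint x‖ ^ 2 := fun k => by
    rw [inner_smul_right, ← ContinuousLinearMap.adjoint_inner_left, inner_self_eq_norm_sq_to_K,
      ← RCLike.ofReal_pow, ← RCLike.ofReal_mul, RCLike.ofReal_re]
  simpa only [RCLike.reCLM_apply, innerSL_apply_apply, hterm] using
    RCLike.reCLM.hasSum ((innerSL 𝕜 x).hasSum h)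

theorem re_inner_sub_inner_smul_le (x e : H) :
    RCLike.re (inner 𝕜 x (x - inner 𝕜 e x • e)) ≤ ‖x‖ ^ 2 := by
  rw [inner_sub_right, inner_smul_right, ← inner_conj_symm x e, RCLike.mul_conj, map_sub,
    ← RCLike.ofReal_pow, RCLike.ofReal_re, inner_self_eq_norm_sq]
  linarith [sq_nonneg ‖inner 𝕜 e x‖]

end InnerProduct

section DiagonalSeries

variable {ι κ : Type*} {E : ι → Type*} [∀ i, NormedAddCommGroup (E i)]

theorem lp.norm_sq_eq_tsum (f : lp E 2) : ‖f‖ ^ 2 = ∑' i, ‖f i‖ ^ 2 := by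
  simpa using lp.norm_rpow_eq_tsum (p := 2) (by norm_num) f

theorem lp.summable_norm_sq (f : lp E 2) : Summable fun i => ‖f i‖ ^ 2 := by
  simpa using (lp.memℓp f).summable (p := 2) (by norm_num)

variable [∀ i, NormedSpace ℝ (E i)]

theorem lp.hasSum_of_hasSum_diagonal {m : κ → ι → ℝ} {d : ι → ℝ} {C : ℝ}
    (hm : ∀ k i, 0 ≤ m k i) (hmd : ∀ i, HasSum (m · i) (d i)) (hdC : ∀ i, d i ≤ C)
    {x y : lp E 2} {f : κ → lp E 2} (hf : ∀ k i, f k i = m k i • x i)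
    (hy : ∀ i, y i = d i • x i) : HasSum f y := by
  rw [HasSum, SummationFilter.unconditional_filter, tendsto_iff_norm_sub_tendsto_zero]
  have hcoord : ∀ F i, (∑ k ∈ F, f k - y) i = (∑ k ∈ F, m k i - d i) • x i := by
    intro F i
    rw [lp.coeFn_sub, Pi.sub_apply, lp.coeFn_sum, Finset.sum_apply, hy, sub_smul, Finset.sum_smul]
    simp only [hf]
  have hbound : ∀ (F : Finset κ) i,
      ‖∑ k ∈ F, m k i - d i‖ ^ 2 * ‖x i‖ ^ 2 ≤ C ^ 2 * ‖x i‖ ^ 2 := by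
    intro F i
    have hle : ∑ k ∈ F, m k i ≤ d i := sum_le_hasSum F (fun k _ => hm k i) (hmd i)
    have hnonneg : 0 ≤ ∑ k ∈ F, m k i := Finset.sum_nonneg fun k _ => hm k i
    gcongr
    rw [Real.norm_eq_abs, abs_sub_comm, abs_of_nonneg (by linarith)]
    linarith [hdC i]
  have hsq : Tendsto (fun F => ‖∑ k ∈ F, f k - y‖ ^ 2) atTop (𝓝 0) := by
    simp_rw [lp.norm_sq_eq_tsum, hcoord, norm_smul, mul_pow]
    simpa using tendsto_tsum_of_dominated_convergence ((lp.summable_norm_sq x).mul_left (C ^ 2))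
      (fun i => ((((hmd i).sub_const (d i)).norm.pow 2).mul_const (‖x i‖ ^ 2)))
      (.of_forall fun F i => by
        rw [Real.norm_of_nonneg (by positivity)]; exact hbound F i)
  simpa [Real.sqrt_sq (norm_nonneg _)] using hsq.sqrt

end DiagonalSeries

section Factorizations

variable {n : ℕ}

abbrev Factorization (α : Word n) : Type :=
  {L : List (Word n) // L.prod = α ∧ ∀ w ∈ L, w ≠ 1}

instance : Unique (Factorization (1 : Word n)) where
  default := ⟨[], rfl, by simp⟩
  uniq := by
    rintro ⟨_ | ⟨w, L⟩, hprod, hne⟩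
    · rfl
    · exact absurd (eq_one_of_mul_right' hprod) (hne w List.mem_cons_self)

def sigmaFactorizationEquiv {α : Word n} (hα : α ≠ 1) :
    (Σ p : PrefixSplit α, Factorization p.1.2) ≃ Factorization α where
  toFun q := ⟨q.1.1.1 :: q.2.1, by rw [List.prod_cons, q.2.2.1, q.1.2.1], by
    rintro w (_ | ⟨_, hw⟩)
    exacts [q.1.2.2, q.2.2.2 w hw]⟩
  invFun L := match L with
    | ⟨[], hprod, _⟩ => absurd hprod.symm hα
    | ⟨w :: L, hprod, hne⟩ =>
      ⟨⟨(w, L.prod), hprod, hne w List.mem_cons_self⟩,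
        ⟨L, rfl, fun v hv => hne v (List.mem_cons_of_mem w hv)⟩⟩
  left_inv := by
    rintro ⟨⟨⟨u, v⟩, huv, hu⟩, ⟨L, hL, hne⟩⟩
    dsimp only at hL
    subst hL
    rfl
  right_inv := by
    rintro ⟨_ | ⟨w, L⟩, hprod, hne⟩
    · exact absurd hprod.symm hα
    · rfl

instance (α : Word n) : Finite (Factorization α) := by
  induction h : α.length using Nat.strong_induction_on generalizing α with
  | _ k ih =>
    by_cases hα : α = 1
    · subst hα; infer_instance
    · have : ∀ p : PrefixSplit α, Finite (Factorization p.1.2) :=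
        fun p => ih _ (h ▸ p.length_snd_lt) _ rfl
      exact Finite.of_equiv _ (sigmaFactorizationEquiv hα)

theorem tsum_factorization (a : Word n → ℝ) (α : Word n) :
    ∑' L : Factorization α, (L.1.map a).prod = bCoeff a α := by
  by_cases hα : α = 1
  · subst hα
    rw [(hasSum_unique _).tsum_eq, bCoeff, if_pos rfl]
    rfl
  · rw [bCoeff, if_neg hα]

theorem bCoeff_eq_tsum_prefixSplit (a : Word n → ℝ) {α : Word n} (hα : α ≠ 1) :
    bCoeff a α = ∑' p : PrefixSplit α, a p.1.1 * bCoeff a p.1.2 := by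
  rw [← tsum_factorization, ← (sigmaFactorizationEquiv hα).tsum_eq,
    Summable.tsum_sigma' (fun _ => .of_finite) .of_finite]
  refine tsum_congr fun p => ?_
  rw [← tsum_factorization, ← tsum_mul_left]
  rfl

theorem bCoeff_nonneg {a : Word n → ℝ} (ha : ∀ α, 0 ≤ a α) (α : Word n) : 0 ≤ bCoeff a α := by
  rw [← tsum_factorization]
  exact tsum_nonneg fun L => List.prod_nonneg fun r hr => by
    obtain ⟨w, -, rfl⟩ := List.mem_map.1 hr
    exact ha w

theorem bCoeff_pos {a : Word n → ℝ} (ha : ∀ α, 0 ≤ a α)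
    (hgen : ∀ i : Fin n, 0 < a (FreeMonoid.of i)) (α : Word n) : 0 < bCoeff a α := by
  induction α using FreeMonoid.inductionOn' with
  | one => simp [bCoeff]
  | of_mul i γ ih =>
    rw [bCoeff_eq_tsum_prefixSplit a (FreeMonoid.of_ne_one i ∘ eq_one_of_mul_right')]
    exact Summable.tsum_pos .of_finite (fun p => mul_nonneg (ha _) (bCoeff_nonneg ha _))
      ⟨(FreeMonoid.of i, γ), rfl, FreeMonoid.of_ne_one i⟩ (mul_pos (hgen i) ih)

end Factorizations

section WeightedCreation

open Function

variable {n : ℕ}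

theorem opWord_of_mul {H : Type*} [NormedAddCommGroup H] [NormedSpace ℂ H]
    (T : Fin n → H →L[ℂ] H) (i : Fin n) (β : Word n) (x : H) :
    opWord T (FreeMonoid.of i * β) x = T i (opWord T β x) := by
  simp [opWord]

theorem opWord_apply_of_weighted {H : Type*} [NormedAddCommGroup H] [NormedSpace ℂ H]
    {T : Fin n → H →L[ℂ] H} {e : Word n → H} {r : Word n → ℂ} (hr : ∀ α, r α ≠ 0)
    (hT : ∀ i α, T i (e α) = (r α / r (FreeMonoid.of i * α)) • e (FreeMonoid.of i * α))
    (β γ : Word n) : opWord T β (e γ) = (r γ / r (β * γ)) • e (β * γ) := by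
  induction β using FreeMonoid.inductionOn' with
  | one => simp [opWord, div_self (hr γ)]
  | of_mul i β ih =>
    rw [opWord_of_mul, ih, map_smul, hT, smul_smul, mul_assoc,
      div_mul_div_cancel₀ (hr _)]

variable {a : Word n → ℝ} {W : Fin n → Fock n →L[ℂ] Fock n}

theorem opWord_fockBasis (hb : ∀ α, 0 < bCoeff a α) (hW : IsWeightedShift a W)
    (β γ : Word n) :
    opWord W β (fockBasis γ) =
      ((√(bCoeff a γ) / √(bCoeff a (β * γ)) : ℝ) : ℂ) • fockBasis (β * γ) := by
  push_cast
  refine opWord_apply_of_weighted (T := W) (e := fockBasis) (r := fun α => (√(bCoeff a α) : ℂ))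
    (fun α => ?_) (fun i α => ?_) β γ
  · exact_mod_cast (Real.sqrt_pos.2 (hb α)).ne'
  · rw [hW, Real.sqrt_div (hb α).le]
    push_cast
    rfl

/-- The `α`-th diagonal entry of `a_β W_β W_β^*`. -/
noncomputable def diagCoeff (a : Word n → ℝ) (β α : Word n) : ℝ :=
  a β * extend (β * ·) (fun γ => bCoeff a γ / bCoeff a (β * γ)) 0 α

theorem diagCoeff_nonneg (ha : ∀ α, 0 ≤ a α) (β α : Word n) : 0 ≤ diagCoeff a β α := by
  refine mul_nonneg (ha β) ?_
  by_cases h : ∃ γ, β * γ = α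
  · obtain ⟨γ, rfl⟩ := h
    rw [(mul_right_injective β).extend_apply]
    exact div_nonneg (bCoeff_nonneg ha γ) (bCoeff_nonneg ha _)
  · rw [extend_apply' _ _ _ h]
    rfl

theorem smul_opWord_adjoint_apply (hb : ∀ α, 0 < bCoeff a α) (hW : IsWeightedShift a W)
    (β : Word n) (x : Fock n) (α : Word n) :
    ((a β : ℂ) • opWord W β ((opWord W β).adjoint x) : Fock n) α = diagCoeff a β α • x α := by
  have hnorm : (fun γ => ‖((√(bCoeff a γ) / √(bCoeff a (β * γ)) : ℝ) : ℂ)‖ ^ 2) =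
      fun γ => bCoeff a γ / bCoeff a (β * γ) := funext fun γ => by
    rw [Complex.norm_real, Real.norm_of_nonneg (by positivity), div_pow,
      Real.sq_sqrt (hb γ).le, Real.sq_sqrt (hb _).le]
  rw [lp.coeFn_smul, Pi.smul_apply,
    apply_adjoint_apply_of_weighted (mul_right_injective β) (opWord_fockBasis hb hW β), hnorm,
    diagCoeff, mul_smul]
  rfl

theorem hasSum_diagCoeff (hb : ∀ α, 0 < bCoeff a α) (α : Word n) :
    HasSum (fun β : {γ : Word n // γ ≠ 1} => diagCoeff a β.1 α) (if α = 1 then 0 else 1) := by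
  let g : PrefixSplit α → {γ : Word n // γ ≠ 1} := fun p => ⟨p.1.1, p.2.2⟩
  have hg : Injective g := by
    intro p q hpq
    have h1 : p.1.1 = q.1.1 := congrArg Subtype.val hpq
    have h2 : p.1.2 = q.1.2 := mul_left_cancel (h1 ▸ p.2.1.trans q.2.1.symm)
    exact Subtype.ext (Prod.ext h1 h2)
  have hsupp : ∀ β ∉ Set.range g, diagCoeff a β.1 α = 0 := by
    intro β hβ
    rw [diagCoeff, extend_apply' _ _ _ fun ⟨γ, hγ⟩ => hβ ⟨⟨(β.1, γ), hγ, β.2⟩, rfl⟩]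
    exact mul_zero _
  have hcomp : ∀ p, diagCoeff a (g p).1 α = a p.1.1 * bCoeff a p.1.2 / bCoeff a α := by
    rintro ⟨⟨u, v⟩, rfl, hu⟩
    rw [diagCoeff, (mul_right_injective u).extend_apply, mul_div_assoc]
  rw [← hg.hasSum_iff hsupp, comp_def]
  simp only [hcomp]
  have hsum := (Summable.of_finite (L := .unconditional _) (f := fun p : PrefixSplit α =>
    a p.1.1 * bCoeff a p.1.2 / bCoeff a α)).hasSum
  rw [tsum_div_const] at hsum
  convert hsum using 1
  split_ifs with hα
  · subst hα
    rw [tsum_empty, zero_div]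
  · rw [← bCoeff_eq_tsum_prefixSplit a hα, div_self (hb α).ne']

end WeightedCreation

/-- `I − Σ_{|β|≥1} a_β W_β W_β* = P_ℂ`, the rank-one projection onto the
vacuum vector (the series converging in the strong operator topology); in particular
`Σ_{|α|≥1} a_α W_α W_α* ≤ I`. -/
theorem defect_eq_vacuum_projection {n : ℕ} (a : Word n → ℝ) (hreg : PosRegular a)
    (W : Fin n → Fock n →L[ℂ] Fock n) (hW : IsWeightedShift a W) :
    (∀ x : Fock n,
      HasSum (fun β : {γ : Word n // γ ≠ 1} =>
          (a β.1 : ℂ) • opWord W β.1 ((opWord W β.1).adjoint x))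
        (x - (inner ℂ (fockBasis (1 : Word n)) x : ℂ) • fockBasis (1 : Word n))) ∧
    ∀ x : Fock n,
      (∑' β : {γ : Word n // γ ≠ 1}, a β.1 * ‖(opWord W β.1).adjoint x‖ ^ 2) ≤ ‖x‖ ^ 2 := by
  obtain ⟨-, ha, hgen, -⟩ := hreg
  have hb := bCoeff_pos ha hgen
  have hdefect : ∀ x : Fock n, HasSum (fun β : {γ : Word n // γ ≠ 1} =>
      (a β.1 : ℂ) • opWord W β.1 ((opWord W β.1).adjoint x))
      (x - (inner ℂ (fockBasis (1 : Word n)) x : ℂ) • fockBasis (1 : Word n)) := fun x =>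
    lp.hasSum_of_hasSum_diagonal (C := 1) (fun β => diagCoeff_nonneg ha β.1) (hasSum_diagCoeff hb)
      (fun α => by split_ifs <;> norm_num) (fun β => smul_opWord_adjoint_apply hb hW β.1 x)
      (lp.sub_inner_single_smul_single_apply x 1)
  refine ⟨hdefect, fun x => ?_⟩
  rw [(hasSum_mul_norm_adjoint_sq (hdefect x)).tsum_eq]
  exact re_inner_sub_inner_smul_le x _

end NCDomain
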